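/- arXiv:2506.06402 — 2 statements merged into one kernel-verified Lean document; each statement's English description precedes it below -/
import Mathlib

section
/- Let (X,J,ω) be a closed 2n-dimensional almost Kähler manifold. If X belongs to the class M(k,c) for a sufficiently large uniform constant c > 0 (c > 20 suffices), then the d-harmonic k-forms admit a Hodge decomposition: H^k_d(X) = ⊕_{p+q=k} H^{p,q}_d(X). -/
/-!
Split a `d`-harmonic `k`-form as `x = h + b`, with `h` a sum of `d`-harmonic
`(p, k - p)`-forms and `b`, orthogonal to all of these, in the range of `Δ_∂̄ + Δ_μ`.
Then `b` is `d`-harmonic, so `d b = d* b = 0`. Comparing `⟪Δ_d b, b⟫ = ‖d b‖² + ‖d* b‖²` with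
the expansion of `Δ_d` into component Laplacians and using `d b = d* b = 0` gives
`‖∂̄ b‖² + ‖∂̄* b‖² - ‖μ b‖² - ‖μ* b‖² = 2 Re (⟪(μ - ∂̄) b, μ̄ b⟫ + ⟪(μ* - ∂̄*) b, μ̄* b⟫)`.
By Cauchy–Schwarz the right side is small against the `μ̄`-energy, which the `M(k, c)` inequality
with `c ≥ 20` bounds by the `∂̄`-energy; this forces `(Δ_∂̄ + Δ_μ) b = 0`. As `Δ_∂̄ + Δ_μ` is
symmetric and `b` lies in its range, `b = 0`.
-/

open scoped ComplexInnerProductSpace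

/-- `lap a b = a ∘ b + b ∘ a`; with `b` the formal adjoint of `a` this is the
Laplacian `Δ_a`, and for two odd operators it is their graded commutator. -/
def lap {V : Type*} [AddCommGroup V] [Module ℂ V] (a b : V →ₗ[ℂ] V) : V →ₗ[ℂ] V :=
  a ∘ₗ b + b ∘ₗ a

open RCLike

theorem eq_zero_of_norm_sq_add_norm_sq_le_zero {E : Type*} [NormedAddCommGroup E] {a b : E}
    (h : ‖a‖ ^ 2 + ‖b‖ ^ 2 ≤ 0) : a = 0 ∧ b = 0 := by
  have ha := sq_nonneg ‖a‖
  have hb := sq_nonneg ‖b‖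
  exact ⟨norm_eq_zero.mp (by nlinarith), norm_eq_zero.mp (by nlinarith)⟩

section Laplacian

variable {V : Type*} [NormedAddCommGroup V] [InnerProductSpace ℂ V]

def LinearMap.IsFormalAdjoint (u us : V →ₗ[ℂ] V) : Prop :=
  ∀ x y : V, ⟪u x, y⟫ = ⟪x, us y⟫

namespace LinearMap.IsFormalAdjoint

variable {u v us vs : V →ₗ[ℂ] V}

theorem symm (hu : u.IsFormalAdjoint us) : us.IsFormalAdjoint u := fun x y => by
  rw [← inner_conj_symm, ← hu, inner_conj_symm]

theorem add (hu : u.IsFormalAdjoint us) (hv : v.IsFormalAdjoint vs) :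
    (u + v).IsFormalAdjoint (us + vs) := fun x y => by
  simp only [LinearMap.add_apply, inner_add_left, inner_add_right, hu x, hv x]

end LinearMap.IsFormalAdjoint

theorem inner_lap_apply {u v us vs : V →ₗ[ℂ] V} (hu : u.IsFormalAdjoint us)
    (hv : v.IsFormalAdjoint vs) (x y : V) : ⟪lap u v x, y⟫ = ⟪v x, us y⟫ + ⟪u x, vs y⟫ := by
  rw [lap, LinearMap.add_apply, LinearMap.comp_apply, LinearMap.comp_apply, inner_add_left,
    hu (v x), hv (u x)]

theorem isSymmetric_lap {u us : V →ₗ[ℂ] V} (hu : u.IsFormalAdjoint us) :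
    (lap u us).IsSymmetric := fun x y => by
  rw [inner_lap_apply hu hu.symm, ← inner_conj_symm x, inner_lap_apply hu hu.symm, map_add,
    inner_conj_symm, inner_conj_symm]

theorem re_inner_lap_self {u us : V →ₗ[ℂ] V} (hu : u.IsFormalAdjoint us) (x : V) :
    re ⟪lap u us x, x⟫ = ‖u x‖ ^ 2 + ‖us x‖ ^ 2 := by
  rw [inner_lap_apply hu hu.symm, map_add, inner_self_eq_norm_sq, inner_self_eq_norm_sq,
    add_comm]

theorem lap_apply_eq_zero_iff {u us : V →ₗ[ℂ] V} (hu : u.IsFormalAdjoint us) (x : V) :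
    lap u us x = 0 ↔ u x = 0 ∧ us x = 0 := by
  refine ⟨fun h => eq_zero_of_norm_sq_add_norm_sq_le_zero ?_, fun ⟨h, hs⟩ => by simp [lap, h, hs]⟩
  rw [← re_inner_lap_self hu, h, inner_zero_left, map_zero]

theorem LinearMap.IsSymmetric.eq_zero_of_mem_range_of_apply_eq_zero {T : V →ₗ[ℂ] V}
    (hT : T.IsSymmetric) {b : V} (hb : b ∈ LinearMap.range T) (hTb : T b = 0) : b = 0 := by
  have hb' : b ∈ LinearMap.range T ⊓ (LinearMap.range T)ᗮ :=
    ⟨hb, hT.orthogonal_range ▸ LinearMap.mem_ker.mpr hTb⟩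
  rwa [Submodule.inf_orthogonal_eq_bot, Submodule.mem_bot] at hb'

theorem re_inner_sub_sub_of_add_eq_zero {P Q R S : V} (h : P + Q + R + S = 0) :
    re ⟪P - R, Q - S⟫ = ‖R‖ ^ 2 - ‖P‖ ^ 2 - 2 * re ⟪P - R, S⟫ := by
  obtain rfl : Q = -(P + R + S) := by rw [eq_neg_iff_add_eq_zero, ← h]; abel
  simp only [inner_sub_left, inner_sub_right, inner_neg_right, inner_add_right, map_sub,
    map_add, map_neg, inner_self_eq_norm_sq]
  linarith [inner_re_symm (𝕜 := ℂ) P R]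

theorem four_mul_re_inner_le (a b : V) : 4 * re ⟪a, b⟫ ≤ ‖a‖ ^ 2 + 4 * ‖b‖ ^ 2 := by
  nlinarith [re_inner_le_norm (𝕜 := ℂ) a b, two_mul_le_add_sq ‖a‖ (2 * ‖b‖)]

section Components

variable {mu pa pb mub mus pas pbs mubs : V →ₗ[ℂ] V}

/- Paired with `x`, the left side of `hDelta` gives `‖d x‖² + ‖d* x‖²` and its right side gives
the same plus twice this cross term. -/
theorem re_inner_cross_eq_zero (hmu : mu.IsFormalAdjoint mus) (hpa : pa.IsFormalAdjoint pas)
    (hpb : pb.IsFormalAdjoint pbs) (hmub : mub.IsFormalAdjoint mubs)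
    (hDelta : lap (mu + pa + pb + mub) (mus + pas + pbs + mubs) =
      lap pb pbs + lap pa pas + lap mu mus + lap mub mubs +
        (2 : ℂ) • (lap mub pas + lap mu pbs + lap mubs pb +
          lap mu pas + lap mus pa + lap mub pbs)) (x : V) :
    re ⟪mu x - pb x, pa x - mub x⟫ + re ⟪mus x - pbs x, pas x - mubs x⟫ = 0 := by
  have h := congrArg (fun L => re ⟪L x, x⟫) hDelta
  simp only [two_smul, LinearMap.add_apply, inner_add_left, map_add] at h
  rw [re_inner_lap_self (((hmu.add hpa).add hpb).add hmub), re_inner_lap_self hpb,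
    re_inner_lap_self hpa, re_inner_lap_self hmu, re_inner_lap_self hmub,
    inner_lap_apply hmub hpa.symm, inner_lap_apply hmu hpb.symm, inner_lap_apply hmub.symm hpb,
    inner_lap_apply hmu hpa.symm, inner_lap_apply hmu.symm hpa,
    inner_lap_apply hmub hpb.symm] at h
  simp only [LinearMap.add_apply, norm_add_sq (𝕜 := ℂ), inner_add_left, map_add] at h
  simp only [inner_sub_left, inner_sub_right, map_sub]
  have hsymm (a b : V) := inner_re_symm (𝕜 := ℂ) a b
  linarith [hsymm (mu x) (pa x), hsymm (pa x) (mub x), hsymm (pb x) (mub x),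
    hsymm (pa x) (pb x), hsymm (mus x) (pas x), hsymm (mus x) (pbs x), hsymm (pbs x) (mubs x),
    hsymm (pas x) (pbs x)]

theorem lap_add_lap_apply_eq_zero (hmu : mu.IsFormalAdjoint mus) (hpa : pa.IsFormalAdjoint pas)
    (hpb : pb.IsFormalAdjoint pbs) (hmub : mub.IsFormalAdjoint mubs)
    (hDelta : lap (mu + pa + pb + mub) (mus + pas + pbs + mubs) =
      lap pb pbs + lap pa pas + lap mu mus + lap mub mubs +
        (2 : ℂ) • (lap mub pas + lap mu pbs + lap mubs pb +
          lap mu pas + lap mus pa + lap mub pbs))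
    {c : ℝ} (hc : 20 ≤ c) {b : V} (hdb : (mu + pa + pb + mub) b = 0)
    (hdsb : (mus + pas + pbs + mubs) b = 0)
    (hM : c * re ⟪(lap mu mus + lap mub mubs) b, b⟫ ≤ re ⟪(lap pb pbs + lap mu mus) b, b⟫) :
    (lap pb pbs + lap mu mus) b = 0 := by
  simp only [LinearMap.add_apply] at hdb hdsb
  simp only [LinearMap.add_apply, inner_add_left, map_add, re_inner_lap_self hmu,
    re_inner_lap_self hmub, re_inner_lap_self hpb] at hM
  have hcross := re_inner_cross_eq_zero hmu hpa hpb hmub hDelta b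
  rw [re_inner_sub_sub_of_add_eq_zero hdb, re_inner_sub_sub_of_add_eq_zero hdsb] at hcross
  simp only [inner_sub_left, map_sub] at hcross
  have hP := four_mul_re_inner_le (mu b) (mub b)
  have hR := four_mul_re_inner_le (pb b) (-mub b)
  have hp := four_mul_re_inner_le (mus b) (mubs b)
  have hr := four_mul_re_inner_le (pbs b) (-mubs b)
  simp only [inner_neg_right, map_neg, norm_neg] at hR hr
  have hX0 : 0 ≤ ‖mu b‖ ^ 2 + ‖mus b‖ ^ 2 := by positivity
  have hW0 : 0 ≤ ‖mub b‖ ^ 2 + ‖mubs b‖ ^ 2 := by positivity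
  have h20 := mul_le_mul_of_nonneg_right hc (add_nonneg hX0 hW0)
  -- With `Z, X, W` the `pb`-, `mu`-, `mub`-energies: `Z - X ≤ (X + Z) / 2 + 4 W` and
  -- `19 X + 20 W ≤ Z`, so `Z / 2 ≤ Z / 5`.
  have hZ : ‖pb b‖ ^ 2 + ‖pbs b‖ ^ 2 ≤ 0 := by linarith
  have hX : ‖mu b‖ ^ 2 + ‖mus b‖ ^ 2 ≤ 0 := by linarith
  obtain ⟨hpb0, hpbs0⟩ := eq_zero_of_norm_sq_add_norm_sq_le_zero hZ
  obtain ⟨hmu0, hmus0⟩ := eq_zero_of_norm_sq_add_norm_sq_le_zero hX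
  rw [LinearMap.add_apply, (lap_apply_eq_zero_iff hpb b).mpr ⟨hpb0, hpbs0⟩,
    (lap_apply_eq_zero_iff hmu b).mpr ⟨hmu0, hmus0⟩, add_zero]

end Components

end Laplacian

theorem stmt_6_general {V : Type*} [NormedAddCommGroup V] [InnerProductSpace ℂ V]
    (Ω : ℤ × ℤ → Submodule ℂ V)
    (mu pa pb mub mus pas pbs mubs : V →ₗ[ℂ] V)
    (hadj_mu : ∀ x y : V, ⟪mu x, y⟫ = ⟪x, mus y⟫)
    (hadj_pa : ∀ x y : V, ⟪pa x, y⟫ = ⟪x, pas y⟫)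
    (hadj_pb : ∀ x y : V, ⟪pb x, y⟫ = ⟪x, pbs y⟫)
    (hadj_mub : ∀ x y : V, ⟪mub x, y⟫ = ⟪x, mubs y⟫)
    (d ds : V →ₗ[ℂ] V)
    (hd : d = mu + pa + pb + mub)
    (hds : ds = mus + pas + pbs + mubs)
    (hDelta : lap d ds =
      lap pb pbs + lap pa pas + lap mu mus + lap mub mubs +
        (2 : ℂ) • (lap mub pas + lap mu pbs + lap mubs pb +
          lap mu pas + lap mus pa + lap mub pbs))
    (k : ℤ)
    (c : ℝ) (hc : 20 < c)
    (Hsum : Submodule ℂ V)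
    (hHsum : Hsum = ⨆ p : ℤ, (LinearMap.ker (lap d ds) ⊓ Ω (p, k - p)))
    (hvanish : ∀ x ∈ Hsum, mu x = 0 ∧ mus x = 0 ∧ mub x = 0 ∧ mubs x = 0 ∧
      pa x = 0 ∧ pas x = 0 ∧ pb x = 0 ∧ pbs x = 0)
    (hPdec : ∀ a ∈ (⨆ p : ℤ, Ω (p, k - p) : Submodule ℂ V), ∃ h b : V,
      h ∈ Hsum ∧ b ∈ Hsumᗮ ∧ b ∈ LinearMap.range (lap pb pbs + lap mu mus) ∧ a = h + b)
    (hM : ∀ α ∈ Hsumᗮ,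
      c * (⟪(lap mu mus + lap mub mubs) α, α⟫).re ≤
        (⟪(lap pb pbs + lap mu mus) α, α⟫).re) :
    LinearMap.ker (lap d ds) ⊓ (⨆ p : ℤ, Ω (p, k - p)) =
      ⨆ p : ℤ, (LinearMap.ker (lap d ds) ⊓ Ω (p, k - p)) := by
  subst hd hds
  have hadj_d : (mu + pa + pb + mub).IsFormalAdjoint (mus + pas + pbs + mubs) :=
    ((LinearMap.IsFormalAdjoint.add hadj_mu hadj_pa).add hadj_pb).add hadj_mub
  refine le_antisymm ?_ (iSup_le fun p => inf_le_inf_left _ (le_iSup (fun p => Ω (p, k - p)) p))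
  intro x hx
  obtain ⟨hx_harm, hx_deg⟩ := Submodule.mem_inf.mp hx
  obtain ⟨h, b, hh, hb_perp, hb_range, rfl⟩ := hPdec x hx_deg
  have hh_harm : lap (mu + pa + pb + mub) (mus + pas + pbs + mubs) h = 0 := by
    obtain ⟨h_mu, h_mus, h_mub, h_mubs, h_pa, h_pas, h_pb, h_pbs⟩ := hvanish h hh
    refine (lap_apply_eq_zero_iff hadj_d h).mpr ⟨?_, ?_⟩ <;>
      simp only [LinearMap.add_apply, h_mu, h_mus, h_mub, h_mubs, h_pa, h_pas, h_pb, h_pbs,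
        add_zero]
  rw [LinearMap.mem_ker, map_add, hh_harm, zero_add] at hx_harm
  obtain ⟨hdb, hdsb⟩ := (lap_apply_eq_zero_iff hadj_d b).mp hx_harm
  have hb_zero : b = 0 :=
    ((isSymmetric_lap hadj_pb).add (isSymmetric_lap hadj_mu)).eq_zero_of_mem_range_of_apply_eq_zero
      hb_range (lap_add_lap_apply_eq_zero hadj_mu hadj_pa hadj_pb hadj_mub hDelta hc.le hdb hdsb
        (hM b hb_perp))
  rwa [hb_zero, add_zero, ← hHsum]

/-- Hodge decomposition of `d`-harmonic `k`-forms on a closed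
`2n`-dimensional almost Kähler manifold `X ∈ M(k,c)` for a sufficiently large
uniform constant `c > 0` (`c > 20` suffices): `H^k_d = ⊕_{p+q=k} H^{p,q}_d`. -/
theorem stmt_6 {V : Type*} [NormedAddCommGroup V] [InnerProductSpace ℂ V]
    (Ω : ℤ × ℤ → Submodule ℂ V)
    (hInternal : DirectSum.IsInternal Ω)
    (mu pa pb mub mus pas pbs mubs : V →ₗ[ℂ] V)
    (hadj_mu : ∀ x y : V, ⟪mu x, y⟫ = ⟪x, mus y⟫)
    (hadj_pa : ∀ x y : V, ⟪pa x, y⟫ = ⟪x, pas y⟫)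
    (hadj_pb : ∀ x y : V, ⟪pb x, y⟫ = ⟪x, pbs y⟫)
    (hadj_mub : ∀ x y : V, ⟪mub x, y⟫ = ⟪x, mubs y⟫)
    (hmap_mu : ∀ p q : ℤ, ∀ x ∈ Ω (p, q), mu x ∈ Ω (p + 2, q - 1))
    (hmap_pa : ∀ p q : ℤ, ∀ x ∈ Ω (p, q), pa x ∈ Ω (p + 1, q))
    (hmap_pb : ∀ p q : ℤ, ∀ x ∈ Ω (p, q), pb x ∈ Ω (p, q + 1))
    (hmap_mub : ∀ p q : ℤ, ∀ x ∈ Ω (p, q), mub x ∈ Ω (p - 1, q + 2))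
    (d ds : V →ₗ[ℂ] V)
    (hd : d = mu + pa + pb + mub)
    (hds : ds = mus + pas + pbs + mubs)
    (hDelta : lap d ds =
      lap pb pbs + lap pa pas + lap mu mus + lap mub mubs +
        (2 : ℂ) • (lap mub pas + lap mu pbs + lap mubs pb +
          lap mu pas + lap mus pa + lap mub pbs))
    (hT3 : ∀ p q : ℤ, LinearMap.ker (lap d ds) ⊓ Ω (p, q) =
      LinearMap.ker (lap pb pbs) ⊓ LinearMap.ker (lap mu mus) ⊓ Ω (p, q))
    (n k : ℤ) (hn : 0 < n) (hk : 0 < k) (hkn : k ≤ n)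
    (hdim : ∀ p q : ℤ, p < 0 ∨ q < 0 ∨ n < p ∨ n < q → Ω (p, q) = ⊥)
    (c : ℝ) (hc : 20 < c)
    (Hsum : Submodule ℂ V)
    (hHsum : Hsum = ⨆ p : ℤ, (LinearMap.ker (lap d ds) ⊓ Ω (p, k - p)))
    (hvanish : ∀ x ∈ Hsum, mu x = 0 ∧ mus x = 0 ∧ mub x = 0 ∧ mubs x = 0 ∧
      pa x = 0 ∧ pas x = 0 ∧ pb x = 0 ∧ pbs x = 0)
    (hPdec : ∀ a ∈ (⨆ p : ℤ, Ω (p, k - p) : Submodule ℂ V), ∃ h b : V,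
      h ∈ Hsum ∧ b ∈ Hsumᗮ ∧ b ∈ LinearMap.range (lap pb pbs + lap mu mus) ∧ a = h + b)
    (hM : ∀ α ∈ Hsumᗮ,
      c * (⟪(lap mu mus + lap mub mubs) α, α⟫).re ≤
        (⟪(lap pb pbs + lap mu mus) α, α⟫).re) :
    LinearMap.ker (lap d ds) ⊓ (⨆ p : ℤ, Ω (p, k - p)) =
      ⨆ p : ℤ, (LinearMap.ker (lap d ds) ⊓ Ω (p, k - p)) :=
  stmt_6_general Ω mu pa pb mub mus pas pbs mubs hadj_mu hadj_pa hadj_pb hadj_mub d ds hd hds hDelta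
    k c hc Hsum hHsum hvanish hPdec hM
end

section
/- Let (X,J,ω) be a closed 2n-dimensional almost Kähler manifold with n ≥ 2. If the d-harmonic k-forms decompose as H^k_d(X) = ⊕_{p+q=k}H^{p,q}_d(X), then J is complex-C∞-pure-and-full at the k-th stage: H^k_{dR}(X,ℂ) = ⊕_{p+q=k} H^{p,q}(X), where H^{p,q}(X) consists of de Rham classes representable by closed forms of pure bidegree (p,q). Moreover each H^{p,q}(X) is isomorphic to H^{p,q}_d(X). -/
open scoped ComplexInnerProductSpace

/-- if on a closed `2n`-dimensional (`n ≥ 2`) almost Kähler manifold the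
`d`-harmonic `k`-forms satisfy `H^k_d = ⊕_{p+q=k}H^{p,q}_d` (hypothesis `hmain`),
then `J` is complex-`C∞`-pure-and-full at the `k`-th stage: distinct pure-type classes
intersect trivially (pure), every de Rham class of degree `k` is represented by a sum
of closed pure-type forms (full), and every class with a closed `(p,q)`-representative
has a unique `Δ_d`-harmonic `(p,q)`-representative (`H^{p,q} ≅ H^{p,q}_d`). -/
theorem stmt_8 {V : Type*} [NormedAddCommGroup V] [InnerProductSpace ℂ V]
    (Ω : ℤ × ℤ → Submodule ℂ V)
    (hInternal : DirectSum.IsInternal Ω)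
    (mu pa pb mub mus pas pbs mubs : V →ₗ[ℂ] V)
    (hadj_mu : ∀ x y : V, ⟪mu x, y⟫ = ⟪x, mus y⟫)
    (hadj_pa : ∀ x y : V, ⟪pa x, y⟫ = ⟪x, pas y⟫)
    (hadj_pb : ∀ x y : V, ⟪pb x, y⟫ = ⟪x, pbs y⟫)
    (hadj_mub : ∀ x y : V, ⟪mub x, y⟫ = ⟪x, mubs y⟫)
    (hmap_mu : ∀ p q : ℤ, ∀ x ∈ Ω (p, q), mu x ∈ Ω (p + 2, q - 1))
    (hmap_pa : ∀ p q : ℤ, ∀ x ∈ Ω (p, q), pa x ∈ Ω (p + 1, q))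
    (hmap_pb : ∀ p q : ℤ, ∀ x ∈ Ω (p, q), pb x ∈ Ω (p, q + 1))
    (hmap_mub : ∀ p q : ℤ, ∀ x ∈ Ω (p, q), mub x ∈ Ω (p - 1, q + 2))
    (d ds : V →ₗ[ℂ] V)
    (hd : d = mu + pa + pb + mub)
    (hds : ds = mus + pas + pbs + mubs)
    (n : ℤ) (hn : 2 ≤ n)
    (hdim : ∀ p q : ℤ, p < 0 ∨ q < 0 ∨ n < p ∨ n < q → Ω (p, q) = ⊥)
    (hOrth : ∀ p q p' q' : ℤ, (p, q) ≠ (p', q') →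
      ∀ x ∈ Ω (p, q), ∀ y ∈ Ω (p', q'), ⟪x, y⟫ = 0)
    (k : ℤ)
    (hHodge : ∀ a ∈ (⨆ p : ℤ, Ω (p, k - p) : Submodule ℂ V), d a = 0 →
      ∃ h b : V, h ∈ LinearMap.ker (lap d ds) ⊓ (⨆ p : ℤ, Ω (p, k - p)) ∧ a = h + d b)
    (hPdec : ∀ p q : ℤ, ∀ a ∈ Ω (p, q), ∃ h b : V,
      h ∈ LinearMap.ker (lap d ds) ⊓ Ω (p, q) ∧
      a = h + (lap pb pbs + lap mu mus) b)
    (hmain : LinearMap.ker (lap d ds) ⊓ (⨆ p : ℤ, Ω (p, k - p)) =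
      ⨆ p : ℤ, (LinearMap.ker (lap d ds) ⊓ Ω (p, k - p))) :
    (∀ p₁ q₁ p₂ q₂ : ℤ, p₁ + q₁ = k → p₂ + q₂ = k → (p₁, q₁) ≠ (p₂, q₂) →
      ∀ a ∈ Ω (p₁, q₁), ∀ b ∈ Ω (p₂, q₂), d a = 0 → d b = 0 →
        a - b ∈ LinearMap.range d → a ∈ LinearMap.range d) ∧
    (∀ a ∈ (⨆ p : ℤ, Ω (p, k - p) : Submodule ℂ V), d a = 0 →
      ∃ (s : Finset ℤ) (f : ℤ → V) (g : V),
        (∀ p ∈ s, f p ∈ Ω (p, k - p) ∧ d (f p) = 0) ∧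
        a = (∑ p ∈ s, f p) + d g) ∧
    (∀ p q : ℤ, p + q = k → ∀ a ∈ Ω (p, q), d a = 0 →
      ∃! h : V, h ∈ LinearMap.ker (lap d ds) ⊓ Ω (p, q) ∧
        a - h ∈ LinearMap.range d) := by

  classical
  have hadj_d : ∀ x y : V, ⟪d x, y⟫ = ⟪x, ds y⟫ := by
    intro x y
    simp only [hd, hds, LinearMap.add_apply, inner_add_left, inner_add_right,
      hadj_mu, hadj_pa, hadj_pb, hadj_mub]
  have hadj_ds : ∀ x y : V, ⟪ds x, y⟫ = ⟪x, d y⟫ := by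
    intro x y
    rw [← inner_conj_symm, ← hadj_d, inner_conj_symm]
  -- harmonic elements are closed and co-closed
  have hharm : ∀ h : V, h ∈ LinearMap.ker (lap d ds) → d h = 0 ∧ ds h = 0 := by
    intro h hh
    have h0 : ⟪(lap d ds) h, h⟫ = 0 := by
      rw [LinearMap.mem_ker.mp hh]; simp
    have e : (lap d ds) h = d (ds h) + ds (d h) := rfl
    rw [e, inner_add_left, hadj_d (ds h) h, hadj_ds (d h) h,
      inner_self_eq_norm_sq_to_K, inner_self_eq_norm_sq_to_K] at h0
    have h1 : (‖ds h‖ ^ 2 + ‖d h‖ ^ 2 : ℝ) = 0 := by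
      have h0' : ((‖ds h‖ ^ 2 + ‖d h‖ ^ 2 : ℝ) : ℂ) = 0 := by push_cast; exact h0
      exact Complex.ofReal_eq_zero.mp h0'
    have h2 : ‖d h‖ = 0 := by nlinarith [sq_nonneg ‖d h‖, sq_nonneg ‖ds h‖]
    have h3 : ‖ds h‖ = 0 := by nlinarith [sq_nonneg ‖d h‖, sq_nonneg ‖ds h‖]
    exact ⟨norm_eq_zero.mp h2, norm_eq_zero.mp h3⟩
  -- harmonic elements are orthogonal to the range of d
  have horth_range : ∀ h : V, h ∈ LinearMap.ker (lap d ds) → ∀ w, ⟪d w, h⟫ = 0 := by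
    intro h hh w
    rw [hadj_d, (hharm h hh).2, inner_zero_right]
  have hzero : ∀ h : V, h ∈ LinearMap.ker (lap d ds) → h ∈ LinearMap.range d → h = 0 := by
    rintro h hh ⟨w, hw⟩
    have : ⟪h, h⟫ = 0 := hw ▸ horth_range h hh w
    exact inner_self_eq_zero.mp this
  -- the key lemma: a closed pure form has a harmonic pure representative
  have key : ∀ p q : ℤ, p + q = k → ∀ a ∈ Ω (p, q), d a = 0 →
      ∃ h b : V, h ∈ LinearMap.ker (lap d ds) ⊓ Ω (p, q) ∧ a = h + d b := by
    intro p q hpq a ha hda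
    have hq : q = k - p := by omega
    subst hq
    have haΩ : a ∈ (⨆ p : ℤ, Ω (p, k - p) : Submodule ℂ V) :=
      le_iSup (fun p => Ω (p, k - p)) p ha
    obtain ⟨h, b, hm, hab⟩ := hHodge a haΩ hda
    rw [hmain] at hm
    obtain ⟨f, hf, hsum⟩ := (Submodule.mem_iSup_iff_exists_finsupp _ _).mp hm
    have hfk : ∀ j : ℤ, f j ∈ LinearMap.ker (lap d ds) :=
      fun j => (Submodule.mem_inf.mp (hf j)).1
    have hfΩ : ∀ j : ℤ, f j ∈ Ω (j, k - j) :=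
      fun j => (Submodule.mem_inf.mp (hf j)).2
    have hcomp : ∀ j : ℤ, j ≠ p → f j = 0 := by
      intro j hj
      have h1 : ⟪f j, a⟫ = 0 :=
        hOrth j (k - j) p (k - p) (by simp [hj]) (f j) (hfΩ j) a ha
      have h2 : ⟪f j, d b⟫ = 0 := by
        rw [← inner_conj_symm, horth_range (f j) (hfk j) b, map_zero]
      have h3 : ⟪f j, h⟫ = 0 := by
        have hh : h = a - d b := by rw [hab]; abel
        rw [hh, inner_sub_right, h1, h2, sub_zero]
      have h4 : ⟪f j, h⟫ = ⟪f j, f j⟫ := by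
        rw [← hsum, Finsupp.sum, inner_sum]
        apply Finset.sum_eq_single
        · intro i _ hij
          exact hOrth j (k - j) i (k - i) (by simp [Ne.symm hij]) (f j) (hfΩ j) (f i) (hfΩ i)
        · intro hjs
          rw [Finsupp.notMem_support_iff.mp hjs, inner_zero_right]
      exact inner_self_eq_zero.mp (h4 ▸ h3)
    refine ⟨h, b, ?_, hab⟩
    rw [← hsum, Finsupp.sum]
    apply Submodule.sum_mem
    intro i hi
    by_cases hip : i = p
    · subst hip; exact Submodule.mem_inf.mpr ⟨hfk i, hfΩ i⟩
    · rw [hcomp i hip]; exact Submodule.zero_mem _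
  refine ⟨?_, ?_, ?_⟩
  · -- pure
    rintro p₁ q₁ p₂ q₂ h₁ h₂ hne a ha b hb hda hdb ⟨c, hc⟩
    obtain ⟨hA, bA, hmA, heqA⟩ := key p₁ q₁ h₁ a ha hda
    obtain ⟨hB, bB, hmB, heqB⟩ := key p₂ q₂ h₂ b hb hdb
    have hsub : hA - hB = d (c - bA + bB) := by
      have e : d (c - bA + bB) = (a - b) - d bA + d bB := by
        rw [map_add, map_sub, hc]
      rw [e, heqA, heqB]; abel
    have hker : hA - hB ∈ LinearMap.ker (lap d ds) :=
      Submodule.sub_mem _ (Submodule.mem_inf.mp hmA).1 (Submodule.mem_inf.mp hmB).1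
    have hAB : hA = hB :=
      sub_eq_zero.mp (hzero _ hker ⟨c - bA + bB, hsub.symm⟩)
    have hA0 : hA = 0 := by
      have h5 : ⟪hA, hB⟫ = 0 := hOrth p₁ q₁ p₂ q₂ hne hA (Submodule.mem_inf.mp hmA).2 hB
        (Submodule.mem_inf.mp hmB).2
      rw [← hAB] at h5
      exact inner_self_eq_zero.mp h5
    exact ⟨bA, by rw [heqA, hA0, zero_add]⟩
  · -- full
    intro a ha hda
    obtain ⟨h, g, hm, hab⟩ := hHodge a ha hda
    rw [hmain] at hm
    obtain ⟨f, hf, hsum⟩ := (Submodule.mem_iSup_iff_exists_finsupp _ _).mp hm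
    refine ⟨f.support, f, g, ?_, ?_⟩
    · intro p _
      exact ⟨(Submodule.mem_inf.mp (hf p)).2,
        (hharm _ (Submodule.mem_inf.mp (hf p)).1).1⟩
    · rw [hab, ← hsum, Finsupp.sum]
  · -- isomorphism
    intro p q hpq a ha hda
    obtain ⟨h, b, hm, hab⟩ := key p q hpq a ha hda
    refine ⟨h, ⟨hm, ⟨b, ?_⟩⟩, ?_⟩
    · rw [hab]; abel
    · rintro h' ⟨hm', c, hc⟩
      have hk : h' - h ∈ LinearMap.ker (lap d ds) :=
        Submodule.sub_mem _ (Submodule.mem_inf.mp hm').1 (Submodule.mem_inf.mp hm).1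
      have hdbc : h' - h = d (b - c) := by
        have hb' : d b = a - h := by rw [hab]; abel
        rw [map_sub, hb', hc]; abel
      exact sub_eq_zero.mp (hzero _ hk ⟨b - c, hdbc.symm⟩)
end
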